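/- arXiv:2601.14195 — 2 statements merged into one kernel-verified Lean document; each statement's English description precedes it below -/
import Mathlib

section
/- In the SRI instance with three agents forming a cyclic preference structure (a1: a2, a3; a2: a3, a1; a3: a1, a2), for every matching M, the maximum over agents of the number of blocking pairs containing that agent is at least 1, and the matching {{a1,a2}} achieves maximum exactly 1; hence the minimax value equals 1. -/
/-- A Stable Roommates (SRI) instance: a set of agents, symmetric irreflexive
acceptability, and for each agent a strict (transitive, total, irreflexive)
preference order over its acceptable partners. -/
structure SRI (A : Type) where
  acc : A → A → Prop
  acc_symm : ∀ a b, acc a b → acc b a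
  acc_irrefl : ∀ a, ¬ acc a a
  /-- `pref a b c` : agent `a` strictly prefers `b` to `c`. -/
  pref : A → A → A → Prop
  pref_acc : ∀ a b c, pref a b c → acc a b ∧ acc a c
  pref_trans : ∀ a b c d, pref a b c → pref a c d → pref a b d
  pref_irrefl : ∀ a b, ¬ pref a b b
  pref_total : ∀ a b c, acc a b → acc a c → b ≠ c → pref a b c ∨ pref a c b

/-- A matching, encoded as an involution: `m a = a` means `a` is unmatched. -/
structure Matching {A : Type} (I : SRI A) where
  m : A → A
  invol : ∀ a, m (m a) = a
  acc_matched : ∀ a, m a ≠ a → I.acc a (m a)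

/-- `{a, b}` is a blocking pair: mutually acceptable, and each is unmatched or
prefers the other to its current partner. -/
def blocks {A : Type} (I : SRI A) (M : Matching I) (a b : A) : Prop :=
  I.acc a b ∧ (M.m a = a ∨ I.pref a b (M.m a)) ∧ (M.m b = b ∨ I.pref b a (M.m b))

/-- Number of blocking pairs containing agent `a`. -/
noncomputable def bpa {A : Type} (I : SRI A) (M : Matching I) (a : A) : ℕ :=
  {b | blocks I M a b}.ncard

/-- Maximum over agents of the number of blocking pairs containing that agent. -/
noncomputable def maxBP {A : Type} (I : SRI A) (M : Matching I) : ℕ :=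
  sSup (Set.range fun a => bpa I M a)

/-- Total number of (unordered) blocking pairs. -/
noncomputable def totalBP {A : Type} (I : SRI A) (M : Matching I) : ℕ :=
  {p : Sym2 A | ∃ a b, p = s(a, b) ∧ blocks I M a b}.ncard

/-- Number of agents contained in at least one blocking pair. -/
noncomputable def blockAgents {A : Type} (I : SRI A) (M : Matching I) : ℕ :=
  {a | ∃ b, blocks I M a b}.ncard

/-- Number of matched agents (twice the number of pairs). -/
noncomputable def msize {A : Type} (I : SRI A) (M : Matching I) : ℕ :=
  {a | M.m a ≠ a}.ncard

/-- `M` is a maximum-cardinality matching. -/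
def MaxCard {A : Type} (I : SRI A) (M : Matching I) : Prop :=
  ∀ M' : Matching I, msize I M' ≤ msize I M

/-- The instance is bipartite with respect to the two sides given by `side`. -/
def Bip {A : Type} (I : SRI A) (side : A → Bool) : Prop :=
  ∀ a b, I.acc a b → side a ≠ side b

/-- `M` is stable: no blocking pair. -/
def Stable {A : Type} (I : SRI A) (M : Matching I) : Prop :=
  ∀ a b, ¬ blocks I M a b

/-- Preference lists of the 3-agent cyclic instance: a1: a2 a3; a2: a3 a1; a3: a1 a2. -/
def plist3 : Fin 3 → List (Fin 3) := ![[1, 2], [2, 0], [0, 1]]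

/-!
An involution of a three-element set has a fixed point, so every matching leaves some agent `x`
unmatched. In the cyclic instance, agent `a` ranks `a + 1` first and `a + 2` second; the agent
`x + 2` who ranks `x` first cannot be matched to `x`, so it is unmatched or holds its second
choice, and `{x + 2, x}` blocks. For the matching `{{0, 1}}`, the only blocking pair is `{1, 2}`.
-/

section General

variable {A : Type} {I : SRI A}

theorem Matching.exists_unmatched [Fintype A] (hA : Odd (Fintype.card A)) (M : Matching I) :
    ∃ a, M.m a = a := by
  have : Fact (Nat.Prime 2) := ⟨Nat.prime_two⟩
  refine Equiv.Perm.exists_fixed_point_of_prime (p := 2) (n := 1)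
    (σ := Function.Involutive.toPerm M.m M.invol) hA.not_two_dvd_nat ?_
  ext a
  rw [pow_one, sq, Equiv.Perm.mul_apply]
  exact M.invol a

variable {M : Matching I}

theorem bpa_le_maxBP [Finite A] (a : A) : bpa I M a ≤ maxBP I M :=
  le_csSup (Set.finite_range _).bddAbove ⟨a, rfl⟩

theorem maxBP_le {n : ℕ} (h : ∀ a, bpa I M a ≤ n) : maxBP I M ≤ n :=
  csSup_le' (Set.forall_mem_range.2 h)

theorem one_le_maxBP_of_blocks [Finite A] {a b : A} (h : blocks I M a b) : 1 ≤ maxBP I M :=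
  ((Set.ncard_pos).2 ⟨b, h⟩).trans_le (bpa_le_maxBP a)

theorem bpa_le_one [Finite A] {a : A} (h : ∀ b b', blocks I M a b → blocks I M a b' → b = b') :
    bpa I M a ≤ 1 :=
  (Set.ncard_le_one_iff).2 (h _ _)

end General

section Cyclic

variable {I : SRI (Fin 3)}

theorem acc_iff_ne_of_plist3 (hacc : ∀ a b, I.acc a b ↔ b ∈ plist3 a) {a b : Fin 3} :
    I.acc a b ↔ b ≠ a := by
  rw [hacc]
  revert a b
  decide

theorem pref_iff_of_plist3
    (hpref : ∀ a b c, I.pref a b c ↔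
      b ∈ plist3 a ∧ c ∈ plist3 a ∧ (plist3 a).idxOf b < (plist3 a).idxOf c) {a b c : Fin 3} :
    I.pref a b c ↔ b = a + 1 ∧ c = a + 2 := by
  rw [hpref]
  revert a b c
  decide

theorem blocks_add_two_of_unmatched (hacc : ∀ a b, I.acc a b ↔ b ∈ plist3 a)
    (hpref : ∀ a b c, I.pref a b c ↔
      b ∈ plist3 a ∧ c ∈ plist3 a ∧ (plist3 a).idxOf b < (plist3 a).idxOf c)
    {M : Matching I} {x : Fin 3} (hx : M.m x = x) : blocks I M (x + 2) x := by
  have hx_ne : x ≠ x + 2 := by fin_cases x <;> decide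
  have hne : M.m (x + 2) ≠ x := fun h => hx_ne (by rw [← M.invol (x + 2), h, hx])
  refine ⟨(acc_iff_ne_of_plist3 hacc).2 hx_ne, ?_, Or.inl hx⟩
  rw [pref_iff_of_plist3 hpref]
  have second_choice : ∀ x y : Fin 3, y ≠ x → y = x + 2 ∨ x = x + 2 + 1 ∧ y = x + 2 + 2 := by
    decide
  exact second_choice x _ hne

def zeroOneMatching (hacc : ∀ a b, I.acc a b ↔ b ∈ plist3 a) : Matching I where
  m := ![1, 0, 2]
  invol := by decide
  acc_matched a := by
    rw [hacc]
    revert a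
    decide

theorem blocks_zeroOneMatching_iff (hacc : ∀ a b, I.acc a b ↔ b ∈ plist3 a)
    (hpref : ∀ a b c, I.pref a b c ↔
      b ∈ plist3 a ∧ c ∈ plist3 a ∧ (plist3 a).idxOf b < (plist3 a).idxOf c) {a b : Fin 3} :
    blocks I (zeroOneMatching hacc) a b ↔ s(a, b) = s(1, 2) := by
  simp only [blocks, acc_iff_ne_of_plist3 hacc, pref_iff_of_plist3 hpref, zeroOneMatching]
  revert a b
  decide

end Cyclic

/-- In the cyclic 3-agent SRI instance, every matching has some agent in at least
one blocking pair, and the matching {{a1,a2}} achieves maximum exactly 1, so the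
minimax value equals 1. -/
theorem stmt4 (I : SRI (Fin 3))
    (hacc : ∀ a b, I.acc a b ↔ b ∈ plist3 a)
    (hpref : ∀ a b c, I.pref a b c ↔
      b ∈ plist3 a ∧ c ∈ plist3 a ∧ (plist3 a).idxOf b < (plist3 a).idxOf c) :
    (∀ M : Matching I, 1 ≤ maxBP I M) ∧
    (∃ M : Matching I, M.m 0 = 1 ∧ M.m 1 = 0 ∧ M.m 2 = 2 ∧ maxBP I M = 1) := by
  refine ⟨fun M => ?_, zeroOneMatching hacc, rfl, rfl, rfl, ?_⟩
  · obtain ⟨x, hx⟩ := M.exists_unmatched (by decide)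
    exact one_le_maxBP_of_blocks (blocks_add_two_of_unmatched hacc hpref hx)
  · refine le_antisymm (maxBP_le fun a => bpa_le_one fun b b' hb hb' => ?_)
      (one_le_maxBP_of_blocks ((blocks_zeroOneMatching_iff hacc hpref).2 rfl))
    rw [blocks_zeroOneMatching_iff hacc hpref] at hb hb'
    exact Sym2.congr_right.1 (hb.trans hb'.symm)
end

section
/- Let I be an SRI instance whose acceptability graph has maximum degree at most 2 (every preference list has length at most 2). Then there exists a matching M of I such that every agent is contained in at most one blocking pair, i.e., the minimax value min over matchings M of max over agents of |bp_a(M)| is at most 1. -/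
/-!
Take a matching minimising the number of blocking pairs. If an agent `a` lay in two blocking
pairs `{a, b}` and `{a, c}`, with `a` preferring `b` to `c`, then `b` and `c` are all of `a`'s
list, so `a` is unmatched. Matching `a` with `b` and freeing `b`'s old partner `d` destroys both
pairs; no agent other than `d` is worse off, so every new blocking pair joins `d` to its only
acceptable agent besides `b`. The number of blocking pairs drops, a contradiction.
-/

variable {A : Type} {I : SRI A}

theorem SRI.ne_of_acc {x y : A} (h : I.acc x y) : x ≠ y :=
  fun e => I.acc_irrefl x (e ▸ h)

theorem SRI.pref_asymm {x y z : A} (h : I.pref x y z) : ¬ I.pref x z y :=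
  fun h' => I.pref_irrefl x y (I.pref_trans x y z y h h')

theorem SRI.eq_or_eq_of_acc [Finite A] {x b c y : A} (hdeg : {y | I.acc x y}.ncard ≤ 2)
    (hb : I.acc x b) (hc : I.acc x c) (hbc : b ≠ c) (hy : I.acc x y) : y = b ∨ y = c := by
  have hpair : ({b, c} : Set A) = {y | I.acc x y} :=
    Set.eq_of_subset_of_ncard_le (Set.insert_subset hb (Set.singleton_subset_iff.mpr hc))
      (by rwa [Set.ncard_pair hbc])
  simpa using hpair.symm.subset hy

theorem blocks_symm {M : Matching I} {x y : A} (h : blocks I M x y) : blocks I M y x :=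
  ⟨I.acc_symm _ _ h.1, h.2.2, h.2.1⟩

def Desires (I : SRI A) (M : Matching I) (x y : A) : Prop :=
  M.m x = x ∨ I.pref x y (M.m x)

def NoWorseOff (M M' : Matching I) (x : A) : Prop :=
  ∀ y, Desires I M' x y → Desires I M x y

section NoWorseOff

variable {M M' : Matching I} {x y : A}

theorem blocks_of_noWorseOff (h : blocks I M' x y) (hx : NoWorseOff M M' x)
    (hy : NoWorseOff M M' y) : blocks I M x y :=
  ⟨h.1, hx y h.2.1, hy x h.2.2⟩

theorem noWorseOff_of_eq (h : M'.m x = M.m x) : NoWorseOff M M' x := by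
  intro y
  unfold Desires
  rw [h]
  exact id

theorem noWorseOff_of_desires (hx : M'.m x ≠ x) (h : Desires I M x (M'.m x)) :
    NoWorseOff M M' x := fun _ hy =>
  h.imp_right (I.pref_trans x _ _ _ (hy.resolve_left hx))

end NoWorseOff

theorem not_blocks_partner (M : Matching I) (x : A) : ¬ blocks I M x (M.m x) := by
  rintro ⟨hacc, hx | hx, -⟩
  · rw [hx] at hacc
    exact I.acc_irrefl x hacc
  · exact I.pref_irrefl x _ hx

theorem not_blocks_of_forall_pref_partner {M : Matching I} {x : A} (hx : M.m x ≠ x)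
    (htop : ∀ y, I.acc x y → y ≠ M.m x → I.pref x (M.m x) y) (y : A) : ¬ blocks I M x y := by
  rintro ⟨hacc, hdes, -⟩
  have hy : I.pref x y (M.m x) := hdes.resolve_left hx
  by_cases hyx : y = M.m x
  · exact I.pref_irrefl x y (hyx ▸ hy)
  · exact I.pref_asymm (htop y hacc hyx) hy

theorem unmatched_of_blocks_of_blocks [Finite A] {M : Matching I} {a b c : A}
    (hdeg : {y | I.acc a y}.ncard ≤ 2) (hb : blocks I M a b) (hc : blocks I M a c)
    (hbc : b ≠ c) : M.m a = a := by
  by_contra hmatched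
  rcases I.eq_or_eq_of_acc hdeg hb.1 hc.1 hbc (M.acc_matched a hmatched) with h | h
  · exact not_blocks_partner M a (h ▸ hb)
  · exact not_blocks_partner M a (h ▸ hc)

namespace Matching

instance : Inhabited (Matching I) := ⟨⟨id, fun _ => rfl, fun _ h => absurd rfl h⟩⟩

open Classical in
noncomputable def rematch (M : Matching I) {a b : A} (hab : I.acc a b) : Matching I where
  m x := if x = a then b else if x = b then a else if M.m x = a ∨ M.m x = b then x else M.m x
  invol x := by
    have := M.invol x
    have hab' := I.ne_of_acc hab
    split_ifs <;> grind
  acc_matched x hx := by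
    split_ifs at hx ⊢ with hxa hxb
    · exact hxa ▸ hab
    · exact hxb ▸ I.acc_symm a b hab
    · exact absurd rfl hx
    · exact M.acc_matched x hx

def Displaced (M : Matching I) (a b x : A) : Prop :=
  x ≠ a ∧ x ≠ b ∧ (M.m x = a ∨ M.m x = b)

section Rematch

variable {M : Matching I} {a b x : A}

theorem rematch_apply_left (hab : I.acc a b) : (M.rematch hab).m a = b := if_pos rfl

theorem rematch_apply_right (hab : I.acc a b) : (M.rematch hab).m b = a := by
  simp [rematch, (I.ne_of_acc hab).symm]

theorem rematch_apply_of_not_displaced (hab : I.acc a b) (hxa : x ≠ a) (hxb : x ≠ b)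
    (hx : ¬ M.Displaced a b x) : (M.rematch hab).m x = M.m x := by
  simp only [rematch, if_neg hxa, if_neg hxb]
  exact if_neg fun h => hx ⟨hxa, hxb, h⟩

theorem noWorseOff_rematch (hab : blocks I M a b) (hx : ¬ M.Displaced a b x) :
    NoWorseOff M (M.rematch hab.1) x := by
  by_cases hxa : x = a
  · subst hxa
    refine noWorseOff_of_desires ?_ ?_ <;> rw [rematch_apply_left]
    · exact (I.ne_of_acc hab.1).symm
    · exact hab.2.1
  by_cases hxb : x = b
  · subst hxb
    refine noWorseOff_of_desires ?_ ?_ <;> rw [rematch_apply_right]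
    · exact I.ne_of_acc hab.1
    · exact hab.2.2
  exact noWorseOff_of_eq (rematch_apply_of_not_displaced hab.1 hxa hxb hx)

theorem displaced_of_blocks_rematch (hab : blocks I M a b) {y : A}
    (h' : blocks I (M.rematch hab.1) x y) (h : ¬ blocks I M x y) :
    M.Displaced a b x ∨ M.Displaced a b y := by
  by_contra! hxy
  exact h (blocks_of_noWorseOff h' (noWorseOff_rematch hab hxy.1) (noWorseOff_rematch hab hxy.2))

theorem Displaced.eq_partner_right (ha : M.m a = a) (hx : M.Displaced a b x) : x = M.m b := by
  obtain ⟨hxa, -, hxa' | hxb'⟩ := hx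
  · exact absurd (by rw [← M.invol x, hxa', ha]) hxa
  · rw [← hxb', M.invol]

theorem not_blocks_rematch_partner_right (hab : blocks I M a b) (hb : M.m b ≠ b) :
    ¬ blocks I (M.rematch hab.1) (M.m b) b := by
  intro h
  have hba : I.pref b a (M.m b) := hab.2.2.resolve_left hb
  have hbd : (M.rematch hab.1).m b = b ∨ I.pref b (M.m b) ((M.rematch hab.1).m b) := h.2.2
  rw [rematch_apply_right] at hbd
  rcases hbd with hab' | hbd
  · exact I.ne_of_acc hab.1 hab'
  · exact I.pref_asymm hba hbd

end Rematch

end Matching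

def blockingPairs (I : SRI A) (M : Matching I) : Set (Sym2 A) :=
  Sym2.fromRel (r := blocks I M) ⟨fun _ _ => blocks_symm⟩

theorem mk_mem_blockingPairs {M : Matching I} {x y : A} :
    s(x, y) ∈ blockingPairs I M ↔ blocks I M x y :=
  Sym2.fromRel_prop

section Improvement

variable [Finite A] {M : Matching I} {a b c : A}

theorem ncard_blockingPairs_rematch_sdiff_le_one (hdeg : {y | I.acc (M.m b) y}.ncard ≤ 2)
    (ha : M.m a = a) (hab : blocks I M a b) :
    (blockingPairs I (M.rematch hab.1) \ blockingPairs I M).ncard ≤ 1 := by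
  set d := M.m b
  have hdisplaced : ∀ x y, blocks I (M.rematch hab.1) x y → M.Displaced a b x →
      d ≠ b ∧ s(x, y) ∈ (fun y => s(d, y)) '' ({y | I.acc d y} \ {b}) := by
    intro x y hxy hx
    obtain rfl : x = d := hx.eq_partner_right ha
    refine ⟨hx.2.1, y, ⟨hxy.1, ?_⟩, rfl⟩
    rintro rfl
    exact Matching.not_blocks_rematch_partner_right hab hx.2.1 hxy
  have hnew : ∀ p ∈ blockingPairs I (M.rematch hab.1) \ blockingPairs I M,
      d ≠ b ∧ p ∈ (fun y => s(d, y)) '' ({y | I.acc d y} \ {b}) := by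
    rintro p ⟨hp', hp⟩
    induction p using Sym2.ind with | h x y => ?_
    rw [mk_mem_blockingPairs] at hp' hp
    rcases Matching.displaced_of_blocks_rematch hab hp' hp with hx | hy
    · exact hdisplaced x y hp' hx
    · rw [Sym2.eq_swap]
      exact hdisplaced y x (blocks_symm hp') hy
  by_cases hdb : d = b
  · have hempty : blockingPairs I (M.rematch hab.1) \ blockingPairs I M = ∅ :=
      Set.eq_empty_of_forall_notMem fun p hp => (hnew p hp).1 hdb
    simp [hempty]
  have hbd : b ∈ {y | I.acc d y} := I.acc_symm _ _ (M.acc_matched b hdb)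
  calc _ ≤ ((fun y => s(d, y)) '' ({y | I.acc d y} \ {b})).ncard :=
        Set.ncard_le_ncard fun p hp => (hnew p hp).2
    _ ≤ ({y | I.acc d y} \ {b}).ncard := Set.ncard_image_le
    _ = {y | I.acc d y}.ncard - 1 := Set.ncard_sdiff_singleton_of_mem hbd
    _ ≤ 1 := by omega

theorem ncard_blockingPairs_rematch_lt (hdeg : ∀ x, {y | I.acc x y}.ncard ≤ 2)
    (ha : M.m a = a) (hb : blocks I M a b) (hc : blocks I M a c) (hbc : b ≠ c)
    (hpref : I.pref a b c) :
    (blockingPairs I (M.rematch hb.1)).ncard < (blockingPairs I M).ncard := by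
  set B := blockingPairs I M
  set B' := blockingPairs I (M.rematch hb.1)
  have hfree : ∀ y, ¬ blocks I (M.rematch hb.1) a y := by
    refine not_blocks_of_forall_pref_partner ?_ fun y hy hyb => ?_ <;>
      rw [Matching.rematch_apply_left] at *
    · exact (I.ne_of_acc hb.1).symm
    · rcases I.eq_or_eq_of_acc (hdeg a) hb.1 hc.1 hbc hy with rfl | rfl
      · exact absurd rfl hyb
      · exact hpref
  have hlost : {s(a, b), s(a, c)} ⊆ B \ B' := by
    rintro p (rfl | rfl) <;>
      exact ⟨mk_mem_blockingPairs.mpr ‹_›, fun h => hfree _ (mk_mem_blockingPairs.mp h)⟩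
  have hpair : s(a, b) ≠ s(a, c) := by simp [hbc, Ne.symm (I.ne_of_acc hb.1)]
  have hlost_card : 2 ≤ (B \ B').ncard := Set.ncard_pair hpair ▸ Set.ncard_le_ncard hlost
  have hnew_card : (B' \ B).ncard ≤ 1 := ncard_blockingPairs_rematch_sdiff_le_one (hdeg _) ha hb
  have hB := Set.ncard_inter_add_ncard_sdiff_eq_ncard B B'
  have hB' := Set.ncard_inter_add_ncard_sdiff_eq_ncard B' B
  rw [Set.inter_comm] at hB'
  omega

end Improvement

/-- If every preference list of an SRI instance has length at most 2, then there
is a matching in which every agent is in at most one blocking pair. -/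
theorem stmt8 (A : Type) [Fintype A] (I : SRI A)
    (hdeg : ∀ a, {b | I.acc a b}.ncard ≤ 2) :
    ∃ M : Matching I, ∀ a, bpa I M a ≤ 1 := by
  let potential := fun M : Matching I => (blockingPairs I M).ncard
  let M := Function.argmin potential
  refine ⟨M, fun a => ?_⟩
  by_contra! h
  obtain ⟨b, c, hb, hc, hbc⟩ := (Set.one_lt_ncard_iff (Set.toFinite _)).mp h
  wlog hpref : I.pref a b c generalizing b c
  · exact this c b hc hb hbc.symm ((I.pref_total a b c hb.1 hc.1 hbc).resolve_left hpref)
  have ha : M.m a = a := unmatched_of_blocks_of_blocks (hdeg a) hb hc hbc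
  exact Function.not_lt_argmin potential (M.rematch hb.1)
    (ncard_blockingPairs_rematch_lt hdeg ha hb hc hbc hpref)
end
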